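/- arXiv:2404.13804 — 2 statements merged into one kernel-verified Lean document; each statement's English description precedes it below -/
import Mathlib

section
/- Let N ≥ 2, a_1,...,a_N > 0, c_1,...,c_N ≥ 0, β ≥ 0, K > 0, and define f(q) = (sum_i q_i a_i)(sum_i c_i/(K q_i) + β) on the open simplex {q : q_i > 0, sum q_i = 1}. Fix indices i ≠ j with a_i ≤ a_j and c_i ≥ c_j. For any q in the simplex with q_i < q_j, the vector q' obtained from q by swapping q_i and q_j satisfies f(q') ≤ f(q). -/
/-!
Swapping `q i` and `q j` changes only the `i`- and `j`-terms of each factor of the objective.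
Each factor `∑ q k a k` and `∑ c k / (K q k)` thereby drops by a product of two differences of
equal sign, so both factors decrease, and both are nonnegative.
-/

open Finset

theorem Fintype.sum_comp_swap_mul {ι R : Type*} [Fintype ι] [DecidableEq ι] [CommRing R]
    (x y : ι → R) (i j : ι) :
    ∑ k, x (Equiv.swap i j k) * y k = ∑ k, x k * y k - (x i - x j) * (y i - y j) := by
  rcases eq_or_ne i j with rfl | hij
  · simp
  have hdiff : ∑ k, (x (Equiv.swap i j k) * y k - x k * y k) = -((x i - x j) * (y i - y j)) := by
    rw [Fintype.sum_eq_add i j hij fun k hk => by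
      rw [Equiv.swap_apply_of_ne_of_ne hk.1 hk.2, sub_self]]
    simp only [Equiv.swap_apply_left, Equiv.swap_apply_right]
    ring
  rw [sum_sub_distrib] at hdiff
  linear_combination hdiff

theorem Fintype.sum_comp_swap_mul_le {ι : Type*} [Fintype ι] [DecidableEq ι]
    {x y : ι → ℝ} {i j : ι} (h : 0 ≤ (x i - x j) * (y i - y j)) :
    ∑ k, x (Equiv.swap i j k) * y k ≤ ∑ k, x k * y k := by
  rw [Fintype.sum_comp_swap_mul]
  linarith

section SamplingObjective

variable {ι : Type*} [Fintype ι]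

/-- The objective `f` of Problem P3. -/
noncomputable def samplingObjective (a c : ι → ℝ) (β K : ℝ) (q : ι → ℝ) : ℝ :=
  (∑ k, q k * a k) * ((∑ k, c k / (K * q k)) + β)

variable [DecidableEq ι] {a c : ι → ℝ} {β K : ℝ} {q : ι → ℝ} {i j : ι}

theorem samplingObjective_comp_swap_le (ha : ∀ k, 0 ≤ a k) (hc : ∀ k, 0 ≤ c k) (hβ : 0 ≤ β)
    (hK : 0 < K) (haij : a i ≤ a j) (hcij : c j ≤ c i) (hq : ∀ k, 0 < q k) (hqij : q i < q j) :
    samplingObjective a c β K (q ∘ Equiv.swap i j) ≤ samplingObjective a c β K q := by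
  have hspeed : ∑ k, q (Equiv.swap i j k) * a k ≤ ∑ k, q k * a k :=
    Fintype.sum_comp_swap_mul_le
      (mul_nonneg_of_nonpos_of_nonpos (by linarith) (by linarith))
  have hinv : (K * q j)⁻¹ ≤ (K * q i)⁻¹ :=
    inv_anti₀ (mul_pos hK (hq i)) (by gcongr)
  have hvariance : ∑ k, (K * q (Equiv.swap i j k))⁻¹ * c k ≤ ∑ k, (K * q k)⁻¹ * c k :=
    Fintype.sum_comp_swap_mul_le (x := fun k => (K * q k)⁻¹)
      (mul_nonneg (by linarith) (by linarith))
  simp only [inv_mul_eq_div] at hvariance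
  unfold samplingObjective
  apply mul_le_mul hspeed (by simpa using hvariance)
  · exact add_nonneg (sum_nonneg fun k _ => div_nonneg (hc k) (mul_pos hK (hq _)).le) hβ
  · exact sum_nonneg fun k _ => mul_nonneg (hq k).le (ha k)

end SamplingObjective

theorem swap_inequality_optimal_sampling_general
    {N : ℕ}
    (a c : Fin N → ℝ) (β K : ℝ)
    (ha : ∀ k, 0 < a k) (hc : ∀ k, 0 ≤ c k) (hβ : 0 ≤ β) (hK : 0 < K)
    (i j : Fin N) (haij : a i ≤ a j) (hcij : c j ≤ c i)
    (q : Fin N → ℝ) (hq : ∀ k, 0 < q k)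
    (hqij : q i < q j) :
    (∑ k, (q ∘ Equiv.swap i j) k * a k) *
        ((∑ k, c k / (K * (q ∘ Equiv.swap i j) k)) + β) ≤
      (∑ k, q k * a k) * ((∑ k, c k / (K * q k)) + β) :=
  samplingObjective_comp_swap_le (fun k => (ha k).le) hc hβ hK haij hcij hq hqij

/-- Swap inequality: if client `i` is faster (`a i ≤ a j`) and statistically more
important (`c i ≥ c j`) than client `j`, and `q i < q j`, then swapping the two
sampling probabilities does not increase the objective. -/
theorem swap_inequality_optimal_sampling
    {N : ℕ} (hN : 2 ≤ N)
    (a c : Fin N → ℝ) (β K : ℝ)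
    (ha : ∀ k, 0 < a k) (hc : ∀ k, 0 ≤ c k) (hβ : 0 ≤ β) (hK : 0 < K)
    (i j : Fin N) (hij : i ≠ j) (haij : a i ≤ a j) (hcij : c j ≤ c i)
    (q : Fin N → ℝ) (hq : ∀ k, 0 < q k) (hq1 : ∑ k, q k = 1)
    (hqij : q i < q j) :
    (∑ k, (q ∘ Equiv.swap i j) k * a k) *
        ((∑ k, c k / (K * (q ∘ Equiv.swap i j) k)) + β) ≤
      (∑ k, q k * a k) * ((∑ k, c k / (K * q k)) + β) :=
  swap_inequality_optimal_sampling_general a c β K ha hc hβ hK i j haij hcij q hq hqij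
end

section
/- Fix constants α > 0, β ≥ 0, K > 0, a_1, a_2 > 0 with a_1 ≠ a_2, and c_1, c_2 > 0. Define F(q_1, q_2) = (q_1 a_1 + q_2 a_2)(α(c_1/(K q_1) + c_2/(K q_2)) + β) for q_1, q_2 > 0. Then F is not convex on the positive quadrant; in particular the determinant of its Hessian at some point is negative (the Hessian determinant equals -α^2 (a_1 c_2/q_2^2 - a_2 c_1/q_1^2)^2 / K^2 ≤ 0, and is strictly negative whenever a_1 c_2/q_2^2 ≠ a_2 c_1/q_1^2). -/
/-!
Up to the positive factor `α / K` and an affine term, the objective is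
`R q = a1 c2 · q1 / q2 + a2 c1 · q2 / q1`. This function is homogeneous of degree `0`, hence
constant along rays, and a non-constant function with that property cannot be convex on a cone:
along the segment from `(t, 1)` to `(4 t, 2)` the ratio `q1 / q2` runs through `[t, 2 t]`, where
`R` is increasing once `t` is large, so the value at the midpoint exceeds the average.
-/

open Set

noncomputable def twoClientObjective (α β K a1 a2 c1 c2 : ℝ) (q : ℝ × ℝ) : ℝ :=
  (q.1 * a1 + q.2 * a2) * (α * (c1 / (K * q.1) + c2 / (K * q.2)) + β)

theorem ratio_sum_midpoint_sub_average (A B : ℝ) {t : ℝ} (ht : t ≠ 0) :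
    (A * (5 * t / 2 / (3 / 2)) + B * (3 / 2 / (5 * t / 2))) -
        (1 / 2 * (A * (t / 1) + B * (1 / t)) + 1 / 2 * (A * (4 * t / 2) + B * (2 / (4 * t)))) =
      (10 * A * t ^ 2 - 9 * B) / (60 * t) := by
  field_simp
  ring

theorem not_convexOn_ratio_sum {A : ℝ} (hA : 0 < A) (B : ℝ) :
    ¬ ConvexOn ℝ (Ioi 0 ×ˢ Ioi 0) fun q : ℝ × ℝ => A * (q.1 / q.2) + B * (q.2 / q.1) := by
  intro hconv
  set t := 1 + |B| / A with ht_def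
  have ht : 0 < t := by positivity
  have hAt : A + |B| ≤ A * t := by
    rw [ht_def, mul_add, mul_div_cancel₀ _ hA.ne', mul_one]
  have hgap : 0 < (10 * A * t ^ 2 - 9 * B) / (60 * t) :=
    div_pos (by nlinarith [le_abs_self B, abs_nonneg B]) (by positivity)
  have hmid := hconv.2 (mk_mem_prod (mem_Ioi.2 ht) (mem_Ioi.2 one_pos))
    (mk_mem_prod (mem_Ioi.2 (mul_pos four_pos ht)) (mem_Ioi.2 two_pos))
    (by norm_num : (0 : ℝ) ≤ 1 / 2) (by norm_num : (0 : ℝ) ≤ 1 / 2) (by norm_num)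
  have hpt : (1 / 2 : ℝ) • (t, (1 : ℝ)) + (1 / 2 : ℝ) • (4 * t, (2 : ℝ)) = (5 * t / 2, 3 / 2) := by
    ext <;> simp <;> ring
  rw [hpt] at hmid
  simp only [smul_eq_mul] at hmid
  linarith [ratio_sum_midpoint_sub_average A B ht.ne']

theorem convexOn_ratio_sum_of_convexOn_twoClientObjective {α β K a1 a2 c1 c2 : ℝ}
    (hα : 0 < α) (hK : 0 < K)
    (h : ConvexOn ℝ (Ioi 0 ×ˢ Ioi 0) (twoClientObjective α β K a1 a2 c1 c2)) :
    ConvexOn ℝ (Ioi 0 ×ˢ Ioi 0) fun q : ℝ × ℝ => a1 * c2 * (q.1 / q.2) + a2 * c1 * (q.2 / q.1) := by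
  let ℓ : ℝ × ℝ →ₗ[ℝ] ℝ := β • (a1 • LinearMap.fst ℝ ℝ ℝ + a2 • LinearMap.snd ℝ ℝ ℝ)
  have hℓ := ℓ.concaveOn ((convex_Ioi 0).prod (convex_Ioi 0))
  refine (((h.sub hℓ).add_const (-(α / K * (a1 * c1 + a2 * c2)))).smul
    (div_pos hK hα).le).congr fun q ⟨hq1, hq2⟩ => ?_
  simp only [mem_Ioi] at hq1 hq2
  simp only [twoClientObjective, ℓ, Pi.add_apply, Pi.sub_apply, LinearMap.smul_apply,
    LinearMap.add_apply, LinearMap.fst_apply, LinearMap.snd_apply, smul_eq_mul]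
  field_simp
  ring

theorem exists_pos_div_sq_sub_div_sq_ne_zero {A : ℝ} (hA : A ≠ 0) (B : ℝ) :
    ∃ q1 q2 : ℝ, 0 < q1 ∧ 0 < q2 ∧ A / q2 ^ 2 - B / q1 ^ 2 ≠ 0 := by
  by_cases hAB : A = B
  · refine ⟨1, 2, one_pos, two_pos, ?_⟩
    subst hAB
    intro h
    exact hA (by linarith)
  · exact ⟨1, 1, one_pos, one_pos, by simpa [sub_eq_zero] using hAB⟩

theorem two_client_objective_not_convex_general
    (α β K a1 a2 c1 c2 : ℝ)
    (hα : 0 < α) (hK : 0 < K)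
    (ha1 : 0 < a1)
    (hc2 : 0 < c2) :
    ¬ ConvexOn ℝ {p : ℝ × ℝ | 0 < p.1 ∧ 0 < p.2}
        (fun p : ℝ × ℝ =>
          (p.1 * a1 + p.2 * a2) *
            (α * (c1 / (K * p.1) + c2 / (K * p.2)) + β)) ∧
    ∃ q1 q2 : ℝ, 0 < q1 ∧ 0 < q2 ∧
      -α ^ 2 * (a1 * c2 / q2 ^ 2 - a2 * c1 / q1 ^ 2) ^ 2 / K ^ 2 < 0 := by
  have hA : 0 < a1 * c2 := mul_pos ha1 hc2
  refine ⟨fun h => not_convexOn_ratio_sum hA (a2 * c1)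
    (convexOn_ratio_sum_of_convexOn_twoClientObjective hα hK h), ?_⟩
  obtain ⟨q1, q2, hq1, hq2, hd⟩ := exists_pos_div_sq_sub_div_sq_ne_zero hA.ne' (a2 * c1)
  refine ⟨q1, q2, hq1, hq2, ?_⟩
  rw [neg_mul, neg_div, neg_lt_zero]
  positivity

/-- Non-convexity of the two-client objective
`F (q1, q2) = (q1 a1 + q2 a2) (α (c1/(K q1) + c2/(K q2)) + β)` on the positive
quadrant; in particular the Hessian determinant
`-α² (a1 c2/q2² - a2 c1/q1²)² / K²` is negative at some point. -/
theorem two_client_objective_not_convex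
    (α β K a1 a2 c1 c2 : ℝ)
    (hα : 0 < α) (hβ : 0 ≤ β) (hK : 0 < K)
    (ha1 : 0 < a1) (ha2 : 0 < a2) (ha : a1 ≠ a2)
    (hc1 : 0 < c1) (hc2 : 0 < c2) :
    ¬ ConvexOn ℝ {p : ℝ × ℝ | 0 < p.1 ∧ 0 < p.2}
        (fun p : ℝ × ℝ =>
          (p.1 * a1 + p.2 * a2) *
            (α * (c1 / (K * p.1) + c2 / (K * p.2)) + β)) ∧
    ∃ q1 q2 : ℝ, 0 < q1 ∧ 0 < q2 ∧
      -α ^ 2 * (a1 * c2 / q2 ^ 2 - a2 * c1 / q1 ^ 2) ^ 2 / K ^ 2 < 0 :=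
  two_client_objective_not_convex_general α β K a1 a2 c1 c2 hα hK ha1 hc2
end
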